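/- Let G be a locally compact Hausdorff group that is a union of fewer than 𝔠 compact subsets, and let φ : G → H be a continuous bijective group homomorphism onto a compact Hausdorff group H. Then G is compact (and hence φ is a topological isomorphism). -/

import Mathlib

/-- `X` is a union of fewer than `𝔠` compact subsets. -/
def SigmaCompactLtContinuum (X : Type*) [TopologicalSpace X] : Prop :=
  ∃ 𝒦 : Set (Set X), Cardinal.mk 𝒦 < Cardinal.continuum ∧
    (∀ K ∈ 𝒦, IsCompact K) ∧ ⋃₀ 𝒦 = Set.univ

/-!
Let `O` be the open subgroup generated by a symmetric compact neighbourhood `W` of `1`, so that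
`O = ⋃ₙ Wⁿ` with each `Wⁿ` compact. A compact set meets only finitely many cosets of `O`, hence
`G ⧸ O` has fewer than `𝔠` elements. If every `φ(Wⁿ)` had empty interior, Mycielski's
Cantor-scheme argument in the compact group `H` would give `𝔠` points whose pairwise quotients
avoid `φ(O) = ⋃ₙ φ(Wⁿ)`, i.e. `𝔠` cosets of `O`. So `φ(O)` has interior, is an open subgroup of
finite index in `H`, and `O` has finite index in `G`. Then `G` is σ-compact and the open mapping
theorem makes `φ` a homeomorphism.
-/

open Set Topology Pointwise Function
open scoped Cardinal

theorem SigmaCompactLtContinuum.mk_lt_continuum {X Y : Type*} [TopologicalSpace X]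
    [TopologicalSpace Y] [DiscreteTopology Y] (hX : SigmaCompactLtContinuum X) {f : X → Y}
    (hf : Continuous f) (hsurj : Surjective f) : #Y < 𝔠 := by
  obtain ⟨𝒦, h𝒦, hcomp, hcover⟩ := hX
  have hY : ⋃ K : 𝒦, f '' K = univ := by
    rw [← image_iUnion, ← sUnion_eq_iUnion, hcover, image_univ, hsurj.range_eq]
  have hfin (K : 𝒦) : Cardinal.lift #(f '' K) ≤ ℵ₀ := by
    simpa using ((hcomp K K.2).image hf).finite_of_discrete.lt_aleph0.le
  rw [← Cardinal.lift_lt_continuum, ← Cardinal.mk_univ, ← hY]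
  calc Cardinal.lift #(⋃ K : 𝒦, f '' K)
      ≤ Cardinal.lift #𝒦 * ⨆ K : 𝒦, Cardinal.lift #(f '' K) :=
        Cardinal.mk_iUnion_le_lift _
    _ ≤ Cardinal.lift #𝒦 * ℵ₀ := by gcongr; exact ciSup_le' hfin
    _ < 𝔠 := Cardinal.mul_lt_of_lt Cardinal.aleph0_le_continuum
        (Cardinal.lift_lt_continuum.2 h𝒦) Cardinal.aleph0_lt_continuum

theorem Subgroup.continuum_le_mk_quotient {G : Type*} [Group G] (O : Subgroup G)
    {g : (ℕ → Bool) → G} (hg : Pairwise fun x y => (g x)⁻¹ * g y ∉ O) : 𝔠 ≤ #(G ⧸ O) := by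
  have hinj : Injective fun x => (g x : G ⧸ O) := fun x y hxy => by
    by_contra hne
    exact hg hne (QuotientGroup.eq.1 hxy)
  simpa using Cardinal.lift_mk_le_lift_mk_of_injective hinj

theorem IsCompact.pow {M : Type*} [TopologicalSpace M] [Monoid M] [ContinuousMul M] {s : Set M}
    (hs : IsCompact s) (n : ℕ) : IsCompact (s ^ n) := by
  induction n with
  | zero => simp
  | succ n ih => rw [pow_succ]; exact ih.mul hs

theorem Subgroup.finite_quotient_of_isOpen_map {G H : Type*} [Group G] [TopologicalSpace H]
    [Group H] [ContinuousMul H] [CompactSpace H] {f : G →* H}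
    (hf : Bijective f) (O : Subgroup G) (hO : IsOpen (O.map f : Set H)) : Finite (G ⧸ O) := by
  have := quotient_finite_of_isOpen _ hO
  have := finiteIndex_of_finite_quotient (H := O.map f)
  have : O.FiniteIndex :=
    finiteIndex_iff.2 (index_map_of_bijective hf O ▸ finiteIndex_iff.1 this)
  infer_instance

theorem IsOpen.exists_isOpen_nonempty_closure_subset {X : Type*} [TopologicalSpace X]
    [RegularSpace X] {A : Set X} (hA : IsOpen A) (hAn : A.Nonempty) :
    ∃ U, IsOpen U ∧ U.Nonempty ∧ closure U ⊆ A := by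
  obtain ⟨a, ha⟩ := hAn
  obtain ⟨U, hU, haU, hUA⟩ := isCompact_singleton.exists_isOpen_closure_subset
    (hA.mem_nhdsSet.2 (singleton_subset_iff.2 ha))
  exact ⟨U, hU, ⟨a, haU rfl⟩, hUA⟩

section Group

variable {G : Type*} [TopologicalSpace G] [Group G] [IsTopologicalGroup G]

theorem exists_isOpen_isSigmaCompact_subgroup [WeaklyLocallyCompactSpace G] :
    ∃ O : Subgroup G, IsOpen (O : Set G) ∧ IsSigmaCompact (O : Set G) := by
  obtain ⟨V, hVc, hV1⟩ := exists_compact_mem_nhds (1 : G)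
  set W := V ∪ V⁻¹
  have hWinv (n : ℕ) : (W ^ n)⁻¹ = W ^ n := by
    rw [← inv_pow, union_inv, inv_inv, union_comm]
  let O : Subgroup G :=
    { carrier := ⋃ n : ℕ, W ^ n
      one_mem' := mem_iUnion.2 ⟨0, by simp⟩
      mul_mem' := by
        simp only [mem_iUnion]
        rintro a b ⟨m, ha⟩ ⟨n, hb⟩
        exact ⟨m + n, pow_add W m n ▸ mul_mem_mul ha hb⟩
      inv_mem' := by
        simp only [mem_iUnion]
        rintro a ⟨n, ha⟩
        exact ⟨n, hWinv n ▸ inv_mem_inv.2 ha⟩ }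
  have hO1 : (O : Set G) ∈ 𝓝 1 :=
    Filter.mem_of_superset hV1 fun v hv => mem_iUnion.2 ⟨1, by simp [W, hv]⟩
  exact ⟨O, O.isOpen_of_mem_nhds hO1,
    ⟨fun n => W ^ n, fun n => (hVc.union hVc.inv).pow n, rfl⟩⟩

theorem Subgroup.sigmaCompactSpace_of_countable_quotient (O : Subgroup G) [Countable (G ⧸ O)]
    (hO : IsSigmaCompact (O : Set G)) : SigmaCompactSpace G := by
  have hcover : ⋃ q : G ⧸ O, q.out • (O : Set G) = univ := by
    refine eq_univ_of_forall fun g => mem_iUnion.2 ⟨g, ?_⟩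
    exact mem_leftCoset_iff _ |>.2 <| QuotientGroup.eq.1 (QuotientGroup.out_eq' (g : G ⧸ O))
  rw [← isSigmaCompact_univ_iff, ← hcover]
  exact isSigmaCompact_iUnion _ fun q => hO.image (continuous_const_smul q.out)

theorem exists_isOpen_subset_disjoint_inv_mul {F A B : Set G} (hFc : IsClosed F)
    (hFi : interior F = ∅) (hA : IsOpen A) (hAn : A.Nonempty) (hB : IsOpen B)
    (hBn : B.Nonempty) :
    ∃ U ⊆ A, ∃ V ⊆ B, IsOpen U ∧ U.Nonempty ∧ IsOpen V ∧ V.Nonempty ∧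
      Disjoint (U⁻¹ * V) F := by
  have hAB : ¬ A⁻¹ * B ⊆ F := fun h => by
    have := (hB.mul_left.subset_interior_iff.2 h).trans hFi.subset
    exact (hAn.inv.mul hBn).ne_empty (subset_empty_iff.1 this)
  obtain ⟨_, ⟨a, ha, b, hb, rfl⟩, hab⟩ := not_subset.1 hAB
  obtain ⟨u, v, hu, hv, hau, hbv, huv⟩ :=
    isOpen_prod_iff.1 (hFc.isOpen_compl.preimage continuous_mul) a b hab
  refine ⟨u⁻¹ ∩ A, inter_subset_right, v ∩ B, inter_subset_right, hu.inv.inter hA,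
    ⟨a⁻¹, by simpa using hau, ha⟩, hv.inter hB, ⟨b, hbv, hb⟩, ?_⟩
  rw [← subset_compl_iff_disjoint_right, ← image_mul_prod, image_subset_iff]
  refine (prod_mono ?_ inter_subset_left).trans huv
  rw [inter_inv, inv_inv]
  exact inter_subset_left

theorem exists_shrink_disjoint_inv_mul {ι : Type*} [DecidableEq ι] {F : ℕ → Set G}
    (hFc : ∀ n, IsClosed (F n)) (hFi : ∀ n, interior (F n) = ∅) (R : Finset (ι × ι × ℕ))
    (hR : ∀ r ∈ R, r.1 ≠ r.2.1) {A : ι → Set G} (hA : ∀ i, IsOpen (A i))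
    (hAn : ∀ i, (A i).Nonempty) :
    ∃ B : ι → Set G, (∀ i, B i ⊆ A i ∧ IsOpen (B i) ∧ (B i).Nonempty) ∧
      ∀ r ∈ R, Disjoint ((B r.1)⁻¹ * B r.2.1) (F r.2.2) := by
  induction R using Finset.induction_on with
  | empty => exact ⟨A, fun i => ⟨subset_rfl, hA i, hAn i⟩, by simp⟩
  | @insert r R _ ih =>
    obtain ⟨B, hB, hBR⟩ := ih fun r' hr' => hR r' (Finset.mem_insert_of_mem hr')
    obtain ⟨i, j, n⟩ := r
    have hij : i ≠ j := hR _ (Finset.mem_insert_self _ _)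
    obtain ⟨U, hUB, V, hVB, hU, hUn, hV, hVn, hUV⟩ := exists_isOpen_subset_disjoint_inv_mul
      (hFc n) (hFi n) (hB i).2.1 (hB i).2.2 (hB j).2.1 (hB j).2.2
    set B' := update (update B i U) j V
    have hB' : ∀ k, B' k ⊆ B k ∧ IsOpen (B' k) ∧ (B' k).Nonempty := by
      have hB₁ : ∀ k, update B i U k ⊆ B k ∧ IsOpen (update B i U k) ∧
          (update B i U k).Nonempty :=
        (forall_update_iff B fun k S => S ⊆ B k ∧ IsOpen S ∧ S.Nonempty).2
          ⟨⟨hUB, hU, hUn⟩, fun k _ => ⟨subset_rfl, (hB k).2⟩⟩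
      exact (forall_update_iff _ fun k S => S ⊆ B k ∧ IsOpen S ∧ S.Nonempty).2
        ⟨⟨hVB, hV, hVn⟩, fun k _ => hB₁ k⟩
    refine ⟨B', fun k => ⟨(hB' k).1.trans (hB k).1, (hB' k).2⟩, fun r hr => ?_⟩
    rcases Finset.mem_insert.1 hr with rfl | hr
    · simpa [B', update_of_ne hij] using hUV
    · exact (hBR r hr).mono_left (mul_subset_mul (inv_subset_inv.2 (hB' _).1) (hB' _).1)

structure SeparatedLevel (F : ℕ → Set G) (k : ℕ) where
  set : (Fin k → Bool) → Set G
  isOpen : ∀ s, IsOpen (set s)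
  nonempty : ∀ s, (set s).Nonempty
  disjoint : ∀ s t, s ≠ t → ∀ n < k, Disjoint ((set s)⁻¹ * set t) (F n)

theorem SeparatedLevel.exists_refinement {F : ℕ → Set G} (hFc : ∀ n, IsClosed (F n))
    (hFi : ∀ n, interior (F n) = ∅) {k : ℕ} (L : SeparatedLevel F k) :
    ∃ L' : SeparatedLevel F (k + 1),
      ∀ s : Fin (k + 1) → Bool, closure (L'.set s) ⊆ L.set (Fin.init s) := by
  classical
  obtain ⟨B, hB, hBR⟩ := exists_shrink_disjoint_inv_mul hFc hFi
    ((Finset.univ ×ˢ Finset.univ ×ˢ Finset.range (k + 1)).filter fun r => r.1 ≠ r.2.1)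
    (fun r hr => (Finset.mem_filter.1 hr).2)
    (A := fun s : Fin (k + 1) → Bool => L.set (Fin.init s)) (fun s => L.isOpen _)
    (fun s => L.nonempty _)
  choose C hC hCn hCB using fun s => (hB s).2.1.exists_isOpen_nonempty_closure_subset (hB s).2.2
  have hCB' (s) : C s ⊆ B s := subset_closure.trans (hCB s)
  refine ⟨⟨C, hC, hCn, fun s t hst n hn => ?_⟩, fun s => (hCB s).trans (hB s).1⟩
  exact (hBR (s, t, n) (by simp [hst, hn])).mono_left
    (mul_subset_mul (inv_subset_inv.2 (hCB' s)) (hCB' t))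

theorem exists_pairwise_inv_mul_notMem [CompactSpace G] {F : ℕ → Set G}
    (hFc : ∀ n, IsClosed (F n)) (hFi : ∀ n, interior (F n) = ∅) :
    ∃ u : (ℕ → Bool) → G, Pairwise fun x y => ∀ n, (u x)⁻¹ * u y ∉ F n := by
  choose refinement hrefinement using fun k (L : SeparatedLevel F k) =>
    L.exists_refinement hFc hFi
  let base : SeparatedLevel F 0 := ⟨fun _ => univ, fun _ => isOpen_univ,
    fun _ => univ_nonempty, fun _ _ _ n hn => absurd hn n.not_lt_zero⟩
  let L (k : ℕ) : SeparatedLevel F k := Nat.rec base refinement k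
  let C (x : ℕ → Bool) (k : ℕ) : Set G := closure ((L k).set fun i => x i)
  have hC (x : ℕ → Bool) (k : ℕ) : C x (k + 1) ⊆ (L k).set fun i => x i :=
    hrefinement k (L k) _
  choose u hu using fun x => IsCompact.nonempty_iInter_of_sequence_nonempty_isCompact_isClosed
    (C x) (fun k => (hC x k).trans subset_closure) (fun k => ((L k).nonempty _).closure)
    isClosed_closure.isCompact fun k => isClosed_closure
  have hu_mem (x : ℕ → Bool) (k : ℕ) : u x ∈ (L k).set fun i => x i :=
    hC x k (mem_iInter.1 (hu x) (k + 1))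
  refine ⟨u, fun x y hxy n hn => ?_⟩
  obtain ⟨m, hm⟩ := ne_iff.1 hxy
  have hne : (fun i : Fin (max m n + 1) => x i) ≠ fun i : Fin (max m n + 1) => y i :=
    fun h => hm (congrFun h ⟨m, by omega⟩)
  exact disjoint_left.1 ((L _).disjoint _ _ hne n (by omega))
    (mul_mem_mul (inv_mem_inv.2 (hu_mem x _)) (hu_mem y _)) hn

theorem MonoidHom.compactSpace_of_bijective [SigmaCompactSpace G] {H : Type*}
    [TopologicalSpace H] [Group H] [ContinuousMul H] [CompactSpace H] [T2Space H] (f : G →* H)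
    (hf : Bijective f) (hcont : Continuous f) : CompactSpace G :=
  ((Equiv.ofBijective f hf).toHomeomorphOfContinuousOpen hcont
    (f.isOpenMap_of_sigmaCompact hf.2 hcont)).symm.compactSpace

end Group

theorem compact_of_bijective_to_compact_general
    {G : Type*} [TopologicalSpace G] [Group G] [IsTopologicalGroup G]
    [LocallyCompactSpace G]
    {H : Type*} [TopologicalSpace H] [Group H] [IsTopologicalGroup H]
    [CompactSpace H] [T2Space H]
    (hG : SigmaCompactLtContinuum G)
    (φ : G →* H) (hcont : Continuous φ) (hbij : Function.Bijective φ) :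
    CompactSpace G := by
  obtain ⟨O, hOopen, K, hK, hOK⟩ := exists_isOpen_isSigmaCompact_subgroup (G := G)
  have := QuotientGroup.discreteTopology hOopen
  have hcard : #(G ⧸ O) < 𝔠 :=
    hG.mk_lt_continuum QuotientGroup.continuous_mk QuotientGroup.mk_surjective
  by_cases hint : ∀ n, interior (φ '' K n) = ∅
  · obtain ⟨u, hu⟩ :=
      exists_pairwise_inv_mul_notMem (fun n => ((hK n).image hcont).isClosed) hint
    refine absurd (O.continuum_le_mk_quotient (g := surjInv hbij.2 ∘ u) fun x y hxy hmem => ?_)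
      hcard.not_ge
    rw [← SetLike.mem_coe, ← hOK, mem_iUnion] at hmem
    obtain ⟨n, hn⟩ := hmem
    exact hu hxy n ⟨_, hn, by simp only [comp_apply, map_mul, map_inv, surjInv_eq]⟩
  · push Not at hint
    obtain ⟨n, x, hx⟩ := hint
    have hOφ : IsOpen (O.map φ : Set H) := (O.map φ).isOpen_of_mem_nhds (g := x) <|
      Filter.mem_of_superset (isOpen_interior.mem_nhds hx)
        (interior_subset.trans (image_mono (hOK ▸ subset_iUnion K n)))
    have := O.finite_quotient_of_isOpen_map hbij hOφ
    have := O.sigmaCompactSpace_of_countable_quotient ⟨K, hK, hOK⟩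
    exact φ.compactSpace_of_bijective hbij hcont

theorem compact_of_bijective_to_compact
    {G : Type*} [TopologicalSpace G] [Group G] [IsTopologicalGroup G]
    [LocallyCompactSpace G] [T2Space G]
    {H : Type*} [TopologicalSpace H] [Group H] [IsTopologicalGroup H]
    [CompactSpace H] [T2Space H]
    (hG : SigmaCompactLtContinuum G)
    (φ : G →* H) (hcont : Continuous φ) (hbij : Function.Bijective φ) :
    CompactSpace G :=
  compact_of_bijective_to_compact_general hG φ hcont hbij
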